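/- Let X be a complex vector space, G₁,…,Gₙ linear operators on X with each I−Gᵢ bijective, Γᵢ defined by I−Γᵢ=(I−Gᵢ)⁻¹, and G = Σᵢ Gᵢ. Let L be the n×n operator matrix on Xⁿ with identity operators on the diagonal and Γᵢ in every off-diagonal entry of row i. Then L is bijective on Xⁿ if and only if I−G is bijective on X. -/

import Mathlib

/-!
Let `Aᵢ = I - Gᵢ`. Since `Aᵢ Γᵢ = -Gᵢ`, applying `Aᵢ` to row `i` of `L` turns `L` into
`v ↦ v - C (S v)`, where `S v = Σⱼ vⱼ` and `C x = (Gᵢ x)ᵢ`. The block-diagonal `diag(Aᵢ)` is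
invertible, so `L` is bijective iff `I - C S` is, and by the Jacobson-type identity
`(I - C S)⁻¹ = I + C (I - S C)⁻¹ S` this happens iff `I - S C = I - G` is bijective.
-/

open Function

section OneSubComp

variable {R M N : Type*} [Ring R] [AddCommGroup M] [AddCommGroup N] [Module R M] [Module R N]

theorem LinearMap.bijective_one_sub_comp_of_bijective_one_sub_comp
    (f : M →ₗ[R] N) (g : N →ₗ[R] M) (h : Bijective ⇑((1 : Module.End R N) - f ∘ₗ g)) :
    Bijective ⇑((1 : Module.End R M) - g ∘ₗ f) := by
  constructor
  · rw [← LinearMap.ker_eq_bot, LinearMap.ker_eq_bot']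
    intro x hx
    simp only [LinearMap.sub_apply, Module.End.one_apply, LinearMap.comp_apply,
      sub_eq_zero] at hx
    have hfx : f x = 0 := h.injective <| by
      simp only [LinearMap.sub_apply, Module.End.one_apply, LinearMap.comp_apply, ← hx,
        sub_self, map_zero]
    rw [hx, hfx, map_zero]
  · intro y
    obtain ⟨z, hz⟩ := h.surjective (f y)
    simp only [LinearMap.sub_apply, Module.End.one_apply, LinearMap.comp_apply] at hz
    have hgz : g z - g (f (g z)) = g (f y) := by rw [← map_sub, hz]
    refine ⟨y + g z, ?_⟩
    simp only [LinearMap.sub_apply, Module.End.one_apply, LinearMap.comp_apply]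
    rw [map_add, map_add, ← hgz]
    abel

theorem LinearMap.bijective_one_sub_comp_comm (f : M →ₗ[R] N) (g : N →ₗ[R] M) :
    Bijective ⇑((1 : Module.End R M) - g ∘ₗ f) ↔ Bijective ⇑((1 : Module.End R N) - f ∘ₗ g) :=
  ⟨bijective_one_sub_comp_of_bijective_one_sub_comp g f,
    bijective_one_sub_comp_of_bijective_one_sub_comp f g⟩

end OneSubComp

theorem mul_eq_neg_of_one_sub_mul_one_sub_eq_one {A : Type*} [Ring A] {a b : A}
    (h : (1 - a) * (1 - b) = 1) : (1 - a) * b = -a := by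
  rw [← sub_sub_cancel 1 b, mul_sub, h, mul_one]
  abel

theorem LinearMap.sum_proj_comp_pi {R M X ι : Type*} [Semiring R] [AddCommMonoid M]
    [AddCommMonoid X] [Module R M] [Module R X] [Fintype ι] (G : ι → M →ₗ[R] X) :
    (∑ i, LinearMap.proj i) ∘ₗ LinearMap.pi G = ∑ i, G i := by
  ext x
  simp [LinearMap.sum_apply]

theorem one_sub_apply_add_apply_sub {R X : Type*} [Ring R] [AddCommGroup X] [Module R X]
    {G Γ : Module.End R X} (h : (1 - G) * (1 - Γ) = 1) (x s : X) :
    (1 - G) (x + Γ (s - x)) = x - G s := by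
  have hΓ : (1 - G) (Γ (s - x)) = -G (s - x) :=
    LinearMap.congr_fun (mul_eq_neg_of_one_sub_mul_one_sub_eq_one h) (s - x)
  rw [map_add, hΓ, map_sub]
  simp only [LinearMap.sub_apply, Module.End.one_apply]
  abel

/-- Alternating Schwartz method: with `Γᵢ` the inversion operators of `Gᵢ`
(`I - Γᵢ = (I - Gᵢ)⁻¹`) and `G = Σᵢ Gᵢ`, the operator matrix `L` on `Xⁿ` with identities on
the diagonal and `Γᵢ` in all off-diagonal entries of row `i` is bijective iff `I - G` is
bijective on `X`. -/
theorem stmt1 (X : Type*) [AddCommGroup X] [Module ℂ X] (n : ℕ)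
    (G Γ : Fin n → Module.End ℂ X)
    (hΓ : ∀ i, (1 - Γ i) * (1 - G i) = 1 ∧ (1 - G i) * (1 - Γ i) = 1)
    (L : Module.End ℂ (Fin n → X))
    (hL : ∀ (v : Fin n → X) (i : Fin n),
      L v i = v i + ∑ j ∈ Finset.univ.erase i, Γ i (v j)) :
    Function.Bijective (L : (Fin n → X) → (Fin n → X)) ↔
      Function.Bijective ((1 - ∑ i, G i : Module.End ℂ X) : X → X) := by
  let A : (Fin n → X) ≃ₗ[ℂ] (Fin n → X) := LinearEquiv.piCongrRight fun i =>
    LinearEquiv.ofLinearMap (1 - G i) (1 - Γ i) (hΓ i).2 (hΓ i).1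
  have hAL : ⇑A ∘ ⇑L = ⇑(1 - LinearMap.pi G ∘ₗ ∑ i, LinearMap.proj i) := by
    funext v i
    have hrow : L v i = v i + Γ i (∑ j, v j - v i) := by
      rw [hL, map_sub, map_sum, Finset.sum_erase_eq_sub (Finset.mem_univ i)]
    change (1 - G i) (L v i) = _
    rw [hrow, one_sub_apply_add_apply_sub (hΓ i).2]
    simp
  rw [← EquivLike.comp_bijective _ A, hAL, ← LinearMap.bijective_one_sub_comp_comm,
    LinearMap.sum_proj_comp_pi]
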